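/- Let {Fₙ} be a sequence of CDFs of random variables supported on [Vmin, Vmax] with Vmin ≥ 0, converging to a CDF F in the L² distance ∫ (Fₙ(x) - F(x))² dx → 0. Then for each fixed α ∈ (0,1], CVaR_α(Fₙ) → CVaR_α(F). -/

import Mathlib

/-!
The objectives `ν - α⁻¹ ∫₀^ν F` of the variational formula for two CDFs differ, uniformly in
`ν`, by at most `α⁻¹ ∫ |F - G|`, so CVaR is `α⁻¹`-Lipschitz for the `L¹` distance of CDFs. On the
common support `[Vmin, Vmax]` Cauchy–Schwarz bounds that distance by
`√(Vmax - Vmin) · ‖F - G‖_{L²}`, which tends to zero.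
-/

open MeasureTheory

/-- A CDF of a nonnegative bounded random variable, as a function. -/
def IsBoundedNonnegCDF (F : ℝ → ℝ) : Prop :=
  Monotone F ∧ (∀ x, F x ∈ Set.Icc (0:ℝ) 1) ∧ (∀ x < 0, F x = 0) ∧ ∃ B : ℝ, ∀ x ≥ B, F x = 1

/-- Conditional value at risk via the Rockafellar–Uryasev variational formula,
using `E[(ν - X)⁺] = ∫₀^ν F(y) dy` for nonnegative variables. -/
noncomputable def cvar (α : ℝ) (F : ℝ → ℝ) : ℝ :=
  ⨆ ν : ℝ, (ν - α⁻¹ * ∫ y in (0:ℝ)..ν, F y)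

open Set Filter Topology

lemma abs_ciSup_sub_ciSup_le {ι : Type*} [Nonempty ι] {f g : ι → ℝ}
    (hf : BddAbove (range f)) (hg : BddAbove (range g)) {δ : ℝ} (h : ∀ i, |f i - g i| ≤ δ) :
    |(⨆ i, f i) - ⨆ i, g i| ≤ δ := by
  rw [abs_sub_le_iff, sub_le_iff_le_add, sub_le_iff_le_add]
  constructor <;> refine ciSup_le fun i => ?_
  · linarith [(abs_sub_le_iff.1 (h i)).1, le_ciSup hg i]
  · linarith [(abs_sub_le_iff.1 (h i)).2, le_ciSup hf i]

lemma abs_intervalIntegral_le_integral_abs {f : ℝ → ℝ} (hf : Integrable f) (a b : ℝ) :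
    |∫ x in a..b, f x| ≤ ∫ x, |f x| :=
  (intervalIntegral.norm_integral_le_integral_norm_uIoc).trans
    (setIntegral_le_integral hf.norm (ae_of_all _ fun _ => norm_nonneg _))

lemma integral_eq_intervalIntegral_of_forall_notMem_Icc {E : Type*} [NormedAddCommGroup E]
    [NormedSpace ℝ E] {f : ℝ → E} {a b : ℝ} (hab : a ≤ b) (h : ∀ x ∉ Icc a b, f x = 0) :
    ∫ x, f x = ∫ x in a..b, f x := by
  rw [intervalIntegral.integral_of_le hab, ← integral_Icc_eq_integral_Ioc,
    setIntegral_eq_integral_of_forall_compl_eq_zero h]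

lemma integral_abs_le_sqrt_mul_sqrt {α : Type*} [MeasurableSpace α] {μ : Measure α}
    [IsFiniteMeasure μ] {f : α → ℝ} (hf : MemLp f 2 μ) :
    ∫ x, |f x| ∂μ ≤ √(∫ x, f x ^ 2 ∂μ) * √(μ.real univ) := by
  have h := integral_mul_le_Lp_mul_Lq_of_nonneg (μ := μ) Real.HolderConjugate.two_two
    (f := fun x => |f x|) (g := fun _ => 1) (ae_of_all _ fun _ => abs_nonneg _)
    (ae_of_all _ fun _ => zero_le_one) (by simpa using hf.norm) (by simpa using memLp_const 1)
  simpa [Real.sqrt_eq_rpow] using h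

lemma intervalIntegral_abs_le_sqrt_mul_sqrt {f : ℝ → ℝ} {a b : ℝ} (hab : a ≤ b)
    (hf : MemLp f 2 (volume.restrict (Ioc a b))) :
    ∫ x in a..b, |f x| ≤ √(∫ x in a..b, f x ^ 2) * √(b - a) := by
  simpa [intervalIntegral.integral_of_le hab, Real.volume_real_Ioc_of_le hab]
    using integral_abs_le_sqrt_mul_sqrt hf

noncomputable def cvarObjective (α : ℝ) (F : ℝ → ℝ) (ν : ℝ) : ℝ :=
  ν - α⁻¹ * ∫ y in (0:ℝ)..ν, F y

lemma cvar_eq_iSup_cvarObjective (α : ℝ) (F : ℝ → ℝ) :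
    cvar α F = ⨆ ν, cvarObjective α F ν := rfl

namespace IsBoundedNonnegCDF

variable {F G : ℝ → ℝ}

lemma intervalIntegral_zero_nonneg (hF : IsBoundedNonnegCDF F) (ν : ℝ) :
    0 ≤ ∫ y in (0:ℝ)..ν, F y := by
  obtain ⟨-, h01, h0, -⟩ := hF
  rcases le_total 0 ν with hν | hν
  · exact intervalIntegral.integral_nonneg hν fun y _ => (h01 y).1
  · rw [intervalIntegral.integral_symm, intervalIntegral.integral_of_le hν,
      integral_Ioc_eq_integral_Ioo, setIntegral_eq_zero_of_forall_eq_zero fun y hy => h0 y hy.2,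
      neg_zero]

lemma bddAbove_range_cvarObjective (hF : IsBoundedNonnegCDF F) {α : ℝ} (hα0 : 0 < α)
    (hα1 : α ≤ 1) : BddAbove (range (cvarObjective α F)) := by
  have hI := hF.intervalIntegral_zero_nonneg
  obtain ⟨hmono, -, -, B, hB⟩ := hF
  set C := max B 0
  have hα : 1 ≤ α⁻¹ := (one_le_inv₀ hα0).2 hα1
  refine ⟨C, forall_mem_range.2 fun ν => ?_⟩
  unfold cvarObjective
  rcases le_or_gt ν C with hν | hν
  · nlinarith [hI ν]
  -- beyond `C` the integrand is `1`, so the objective has slope `1 - α⁻¹ ≤ 0` there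
  have htail : ∫ y in C..ν, F y = ν - C := by
    rw [intervalIntegral.integral_congr (g := fun _ => 1)
      fun y hy => hB y (le_trans (le_max_left _ _) (uIcc_of_le hν.le ▸ hy).1)]
    simp
  have hsplit : ∫ y in (0:ℝ)..ν, F y = (∫ y in (0:ℝ)..C, F y) + (ν - C) := by
    rw [← htail, intervalIntegral.integral_add_adjacent_intervals hmono.intervalIntegrable
      hmono.intervalIntegrable]
  nlinarith [hI C]

lemma integrable_sub (hF : IsBoundedNonnegCDF F) (hG : IsBoundedNonnegCDF G) :
    Integrable fun x => F x - G x := by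
  obtain ⟨hFm, -, hF0, BF, hF1⟩ := hF
  obtain ⟨hGm, -, hG0, BG, hG1⟩ := hG
  refine (integrableOn_iff_integrable_of_support_subset (s := Icc 0 (max BF BG)) ?_).1
    ((hFm.locallyIntegrable.sub hGm.locallyIntegrable).integrableOn_isCompact isCompact_Icc)
  intro x hx
  by_contra hout
  rcases not_and_or.1 hout with h | h <;> push Not at h <;> apply hx
  · simp [hF0 x h, hG0 x h]
  · simp [hF1 x (le_of_max_le_left h.le), hG1 x (le_of_max_le_right h.le)]

lemma memLp_sub (hF : IsBoundedNonnegCDF F) (hG : IsBoundedNonnegCDF G) (p : ENNReal)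
    (μ : Measure ℝ) [IsFiniteMeasure μ] : MemLp (fun x => F x - G x) p μ :=
  MemLp.of_bound (hF.1.measurable.sub hG.1.measurable).aestronglyMeasurable 1
    (ae_of_all _ fun x => abs_sub_le_iff.2
      ⟨by linarith [(hF.2.1 x).2, (hG.2.1 x).1], by linarith [(hF.2.1 x).1, (hG.2.1 x).2]⟩)

lemma abs_cvar_sub_cvar_le (hF : IsBoundedNonnegCDF F) (hG : IsBoundedNonnegCDF G) {α : ℝ}
    (hα0 : 0 < α) (hα1 : α ≤ 1) :
    |cvar α F - cvar α G| ≤ α⁻¹ * ∫ x, |F x - G x| := by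
  rw [cvar_eq_iSup_cvarObjective, cvar_eq_iSup_cvarObjective]
  refine abs_ciSup_sub_ciSup_le (hF.bddAbove_range_cvarObjective hα0 hα1)
    (hG.bddAbove_range_cvarObjective hα0 hα1) fun ν => ?_
  calc |cvarObjective α F ν - cvarObjective α G ν|
      = α⁻¹ * |∫ y in (0:ℝ)..ν, (F y - G y)| := by
        rw [intervalIntegral.integral_sub hF.1.intervalIntegrable hG.1.intervalIntegrable,
          ← abs_of_pos (inv_pos.2 hα0), ← abs_mul, ← abs_neg, cvarObjective, cvarObjective]
        ring_nf
    _ ≤ α⁻¹ * ∫ x, |F x - G x| := by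
        gcongr
        exact abs_intervalIntegral_le_integral_abs (hF.integrable_sub hG) 0 ν

end IsBoundedNonnegCDF

open Filter in
theorem cvar_continuous_in_l2_general (Vmin Vmax : ℝ) (hV : Vmin ≤ Vmax)
    (F : ℕ → ℝ → ℝ) (G : ℝ → ℝ)
    (hF : ∀ n, IsBoundedNonnegCDF (F n)) (hG : IsBoundedNonnegCDF G)
    (hFsupp : ∀ n, (∀ x < Vmin, F n x = 0) ∧ (∀ x ≥ Vmax, F n x = 1))
    (hGsupp : (∀ x < Vmin, G x = 0) ∧ (∀ x ≥ Vmax, G x = 1))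
    (hconv : Tendsto (fun n => ∫ x in Vmin..Vmax, (F n x - G x) ^ 2) atTop (nhds 0))
    (α : ℝ) (hα : α ∈ Set.Ioc (0:ℝ) 1) :
    Tendsto (fun n => cvar α (F n)) atTop (nhds (cvar α G)) := by
  have hL1 : ∀ n, ∫ x, |F n x - G x| = ∫ x in Vmin..Vmax, |F n x - G x| := fun n =>
    integral_eq_intervalIntegral_of_forall_notMem_Icc hV fun x hx => by
      rcases not_and_or.1 hx with h | h <;> push Not at h
      · simp [(hFsupp n).1 x h, hGsupp.1 x h]
      · simp [(hFsupp n).2 x h.le, hGsupp.2 x h.le]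
  have hbound : ∀ n, dist (cvar α (F n)) (cvar α G)
      ≤ α⁻¹ * (√(∫ x in Vmin..Vmax, (F n x - G x) ^ 2) * √(Vmax - Vmin)) := fun n => by
    rw [Real.dist_eq]
    refine ((hF n).abs_cvar_sub_cvar_le hG hα.1 hα.2).trans ?_
    rw [hL1]
    exact mul_le_mul_of_nonneg_left
      (intervalIntegral_abs_le_sqrt_mul_sqrt hV ((hF n).memLp_sub hG 2 _)) (inv_nonneg.2 hα.1.le)
  have hlim : Tendsto (fun n => α⁻¹ * (√(∫ x in Vmin..Vmax, (F n x - G x) ^ 2) * √(Vmax - Vmin)))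
      atTop (𝓝 0) := by
    simpa using (hconv.sqrt.mul_const _).const_mul α⁻¹
  exact tendsto_iff_dist_tendsto_zero.2 (squeeze_zero (fun _ => dist_nonneg) hbound hlim)

open Filter in
theorem cvar_continuous_in_l2 (Vmin Vmax : ℝ) (hVmin : 0 ≤ Vmin) (hV : Vmin ≤ Vmax)
    (F : ℕ → ℝ → ℝ) (G : ℝ → ℝ)
    (hF : ∀ n, IsBoundedNonnegCDF (F n)) (hG : IsBoundedNonnegCDF G)
    (hFsupp : ∀ n, (∀ x < Vmin, F n x = 0) ∧ (∀ x ≥ Vmax, F n x = 1))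
    (hGsupp : (∀ x < Vmin, G x = 0) ∧ (∀ x ≥ Vmax, G x = 1))
    (hconv : Tendsto (fun n => ∫ x in Vmin..Vmax, (F n x - G x) ^ 2) atTop (nhds 0))
    (α : ℝ) (hα : α ∈ Set.Ioc (0:ℝ) 1) :
    Tendsto (fun n => cvar α (F n)) atTop (nhds (cvar α G)) :=
  cvar_continuous_in_l2_general Vmin Vmax hV F G hF hG hFsupp hGsupp hconv α hα
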